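/- arXiv:1709.07157 — 4 statements merged into one kernel-verified Lean document; each statement's English description precedes it below -/
import Mathlib

section
/- Let Q : ℝ → Matrix (Fin 3) (Fin 3) ℝ solve dQ/dt = WQ - QW - (aQ - b(Q² - (1/3)|Q|² Id) + c Q |Q|²), and let B(t) = exp(tW). Then U(t) := B(t)ᵀ Q(t) B(t) solves dU/dt = -(aU - b(U² - (1/3)|U|² Id) + c U |U|²). -/
open Matrix

noncomputable def Wmat : Matrix (Fin 3) (Fin 3) ℝ :=
  !![0, 1, 0; -1, 0, 0; 0, 0, 0]

/-- The gradient of the Landau–de Gennes bulk potential,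
`∂F/∂Q = aQ - b(Q² - (1/3)|Q|² Id) + c Q |Q|²`, where `|Q|² = tr(Q²)`. -/
noncomputable def gradF (a b c : ℝ) (Q : Matrix (Fin 3) (Fin 3) ℝ) :
    Matrix (Fin 3) (Fin 3) ℝ :=
  a • Q - b • (Q * Q - ((1 / 3 : ℝ) * Matrix.trace (Q * Q)) • (1 : Matrix (Fin 3) (Fin 3) ℝ))
    + (c * Matrix.trace (Q * Q)) • Q

/-! Differentiating `s ↦ exp (-sW) Q(s) exp (sW)` by the product rule, the terms `-W Q + Q W`
coming from the two exponentials cancel the rotational part `W Q - Q W` of the flow, leaving the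
conjugate of `-gradF Q`. Since `Wᵀ = -W`, `exp (sW)ᵀ = exp (-sW)` is its inverse, and `gradF` is
equivariant under conjugation because `tr (P⁻¹ Q² P) = tr (Q²)`. -/

open NormedSpace

-- Matrices carry no global norm; the operator norm induces the product topology, like any other.
open scoped Matrix.Norms.Operator in
theorem hasDerivAt_matrix_iff {m n 𝕜 : Type*} [Fintype m] [Fintype n]
    [NontriviallyNormedField 𝕜] {f : 𝕜 → Matrix m n 𝕜} {D : Matrix m n 𝕜} {t : 𝕜} :
    HasDerivAt f D t ↔ ∀ i j, HasDerivAt (fun s => f s i j) (D i j) t := by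
  refine hasDerivAt_iff_tendsto_slope.trans ?_
  simp only [hasDerivAt_iff_tendsto_slope]
  exact tendsto_pi_nhds.trans <| forall_congr' fun _ => tendsto_pi_nhds

theorem hasDerivAt_exp_smul_neg_mul_mul_exp_smul {𝕂 𝔸 : Type*} [RCLike 𝕂] [NormedRing 𝔸]
    [NormedAlgebra 𝕂 𝔸] [CompleteSpace 𝔸] {A D : 𝔸} {Q : 𝕂 → 𝔸} {t : 𝕂}
    (hQ : HasDerivAt Q (A * Q t - Q t * A + D) t) :
    HasDerivAt (fun s => exp (s • -A) * Q s * exp (s • A))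
      (exp (t • -A) * D * exp (t • A)) t := by
  refine (((hasDerivAt_exp_smul_const (-A) t).mul hQ).mul
    (hasDerivAt_exp_smul_const' A t)).congr_deriv ?_
  simp only [Pi.mul_apply]
  noncomm_ring

theorem gradF_inv_mul_mul (a b c : ℝ) {P : Matrix (Fin 3) (Fin 3) ℝ} (hP : IsUnit P)
    (Q : Matrix (Fin 3) (Fin 3) ℝ) :
    gradF a b c (P⁻¹ * Q * P) = P⁻¹ * gradF a b c Q * P := by
  rw [isUnit_iff_isUnit_det] at hP
  have hsq : P⁻¹ * Q * P * (P⁻¹ * Q * P) = P⁻¹ * (Q * Q) * P := by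
    simp only [mul_assoc, mul_nonsing_inv_cancel_left P _ hP]
  have htrace : trace (P⁻¹ * (Q * Q) * P) = trace (Q * Q) := by
    rw [trace_mul_cycle, mul_nonsing_inv _ hP, one_mul]
  simp only [gradF, hsq, htrace, mul_sub, sub_mul, mul_add, add_mul, mul_smul_comm,
    smul_mul_assoc, mul_one, nonsing_inv_mul _ hP]

theorem Wmat_transpose : Wmatᵀ = -Wmat := by
  ext i j
  fin_cases i <;> fin_cases j <;> simp [Wmat]

theorem stmt2_general (a b c : ℝ) (Q : ℝ → Matrix (Fin 3) (Fin 3) ℝ)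
    (hQ : ∀ t : ℝ, ∀ i j : Fin 3, HasDerivAt (fun s => Q s i j)
      ((Wmat * Q t - Q t * Wmat - gradF a b c (Q t)) i j) t)
    (U : ℝ → Matrix (Fin 3) (Fin 3) ℝ)
    (hU : ∀ t, U t = (NormedSpace.exp (t • Wmat))ᵀ * Q t * NormedSpace.exp (t • Wmat)) :
    ∀ t : ℝ, ∀ i j : Fin 3, HasDerivAt (fun s => U s i j) ((-(gradF a b c (U t))) i j) t := by
  have hU_exp : U = fun s => exp (s • -Wmat) * Q s * exp (s • Wmat) := funext fun s => by
    rw [hU, ← Matrix.exp_transpose, transpose_smul, Wmat_transpose]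
  subst hU_exp
  intro t
  have hQ' : HasDerivAt Q (Wmat * Q t - Q t * Wmat + -gradF a b c (Q t)) t :=
    hasDerivAt_matrix_iff.mpr (by simpa only [← sub_eq_add_neg] using hQ t)
  have hconj : exp (t • -Wmat) * -gradF a b c (Q t) * exp (t • Wmat)
      = -gradF a b c (exp (t • -Wmat) * Q t * exp (t • Wmat)) := by
    rw [smul_neg, Matrix.exp_neg, mul_neg, neg_mul,
      gradF_inv_mul_mul _ _ _ (Matrix.isUnit_exp _)]
  open scoped Matrix.Norms.Operator in
  exact hasDerivAt_matrix_iff.mp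
    ((hasDerivAt_exp_smul_neg_mul_mul_exp_smul hQ').congr_deriv hconj)

theorem stmt2 (a b c : ℝ) (Q : ℝ → Matrix (Fin 3) (Fin 3) ℝ)
    (hsymm : ∀ t, (Q t)ᵀ = Q t) (htr : ∀ t, Matrix.trace (Q t) = 0)
    (hQ : ∀ t : ℝ, ∀ i j : Fin 3, HasDerivAt (fun s => Q s i j)
      ((Wmat * Q t - Q t * Wmat - gradF a b c (Q t)) i j) t)
    (U : ℝ → Matrix (Fin 3) (Fin 3) ℝ)
    (hU : ∀ t, U t = (NormedSpace.exp (t • Wmat))ᵀ * Q t * NormedSpace.exp (t • Wmat)) :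
    ∀ t : ℝ, ∀ i j : Fin 3, HasDerivAt (fun s => U s i j) ((-(gradF a b c (U t))) i j) t :=
  stmt2_general a b c Q hQ U hU
end

section
/- If U is a real symmetric traceless 3×3 matrix with α := |U|² = tr(U²), then for every ε > 0, |tr(U³)| ≤ (3/2)((ε/4)α² + (1/ε)α). -/
/-!
For a symmetric matrix `U`, the Frobenius Cauchy–Schwarz inequality gives
`tr(U³)² = ⟨U, U²⟩² ≤ tr(U²) · tr(U⁴)`, and `tr(U⁴) ≤ tr(U²)²` because the Gram matrix
`G = U Uᵀ = U²` satisfies `G i j ² ≤ G i i · G j j`. Hence `|tr(U³)| ≤ α^(3/2)`, and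
`α^(3/2) ≤ (ε/4) α² + α/ε` is AM–GM.
-/

open Matrix Finset

namespace Matrix

variable {ι κ : Type*} [Fintype κ]

lemma mul_transpose_self_apply_sq_le (M : Matrix ι κ ℝ) (i j : ι) :
    (M * Mᵀ) i j ^ 2 ≤ (M * Mᵀ) i i * (M * Mᵀ) j j := by
  simp only [mul_apply, transpose_apply]
  simpa only [sq] using sum_mul_sq_le_sq_mul_sq univ (M i) (M j)

variable [Fintype ι]

lemma trace_mul_eq_sum_mul_of_isSymm {A B : Matrix ι ι ℝ} (hB : B.IsSymm) :
    trace (A * B) = ∑ p : ι × ι, A p.1 p.2 * B p.1 p.2 := by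
  simp only [trace, diag, mul_apply, hB.apply, Fintype.sum_prod_type]

lemma IsSymm.trace_mul_self_nonneg {A : Matrix ι ι ℝ} (hA : A.IsSymm) :
    0 ≤ trace (A * A) := by
  rw [trace_mul_eq_sum_mul_of_isSymm hA]
  exact sum_nonneg fun p _ => mul_self_nonneg _

lemma trace_mul_sq_le_of_isSymm {A B : Matrix ι ι ℝ} (hA : A.IsSymm) (hB : B.IsSymm) :
    trace (A * B) ^ 2 ≤ trace (A * A) * trace (B * B) := by
  rw [trace_mul_eq_sum_mul_of_isSymm hB, trace_mul_eq_sum_mul_of_isSymm hA,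
    trace_mul_eq_sum_mul_of_isSymm hB]
  simpa only [sq] using sum_mul_sq_le_sq_mul_sq univ (fun p : ι × ι => A p.1 p.2)
    (fun p => B p.1 p.2)

lemma trace_mul_transpose_self_sq_le (M : Matrix ι κ ℝ) :
    trace (M * Mᵀ * (M * Mᵀ)) ≤ trace (M * Mᵀ) ^ 2 := by
  have hG : (M * Mᵀ).IsSymm := by rw [IsSymm, transpose_mul, transpose_transpose]
  rw [trace_mul_eq_sum_mul_of_isSymm hG, trace, sq, sum_mul_sum, ← Fintype.sum_prod_type']
  exact sum_le_sum fun p _ => by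
    simpa only [sq, diag_apply] using mul_transpose_self_apply_sq_le M p.1 p.2

lemma IsSymm.trace_mul_mul_sq_le {A : Matrix ι ι ℝ} (hA : A.IsSymm) :
    trace (A * A * A) ^ 2 ≤ trace (A * A) ^ 3 := by
  have hAA : (A * A).IsSymm := by rw [IsSymm, transpose_mul, hA.eq]
  calc trace (A * A * A) ^ 2 = trace (A * (A * A)) ^ 2 := by rw [Matrix.mul_assoc]
    _ ≤ trace (A * A) * trace (A * A * (A * A)) := trace_mul_sq_le_of_isSymm hA hAA
    _ ≤ trace (A * A) * trace (A * A) ^ 2 := by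
      gcongr
      · exact hA.trace_mul_self_nonneg
      · simpa only [hA.eq] using trace_mul_transpose_self_sq_le A
    _ = trace (A * A) ^ 3 := by ring

end Matrix

lemma abs_le_of_sq_le_pow_three {T α ε : ℝ} (hε : 0 < ε) (hα : 0 ≤ α) (h : T ^ 2 ≤ α ^ 3) :
    |T| ≤ ε / 4 * α ^ 2 + 1 / ε * α := by
  refine abs_le_of_sq_le_sq ?_ (by positivity)
  calc T ^ 2 ≤ α ^ 3 := h
    _ = 4 * (ε / 4 * α ^ 2) * (1 / ε * α) := by field_simp
    _ ≤ (ε / 4 * α ^ 2 + 1 / ε * α) ^ 2 := four_mul_le_sq_add _ _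

theorem stmt4_general (U : Matrix (Fin 3) (Fin 3) ℝ) (hsymm : Uᵀ = U)
    (α : ℝ) (hα : α = Matrix.trace (U * U)) :
    ∀ ε : ℝ, 0 < ε →
      |Matrix.trace (U * U * U)| ≤ (3 / 2) * ((ε / 4) * α ^ 2 + (1 / ε) * α) := by
  intro ε hε
  have hU : U.IsSymm := hsymm
  have hα₀ : 0 ≤ α := hα ▸ hU.trace_mul_self_nonneg
  calc |trace (U * U * U)| ≤ ε / 4 * α ^ 2 + 1 / ε * α :=
        abs_le_of_sq_le_pow_three hε hα₀ (hα ▸ hU.trace_mul_mul_sq_le)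
    _ ≤ 3 / 2 * (ε / 4 * α ^ 2 + 1 / ε * α) := le_mul_of_one_le_left (by positivity) (by norm_num)

theorem stmt4 (U : Matrix (Fin 3) (Fin 3) ℝ) (hsymm : Uᵀ = U)
    (htr : Matrix.trace U = 0) (α : ℝ) (hα : α = Matrix.trace (U * U)) :
    ∀ ε : ℝ, 0 < ε →
      |Matrix.trace (U * U * U)| ≤ (3 / 2) * ((ε / 4) * α ^ 2 + (1 / ε) * α) :=
  stmt4_general U hsymm α hα
end

section
/- Let n ∈ ℝ³ be a unit vector and s a real number satisfying a·s - (b/3)·s² + (2c/3)·s³ = 0 (equivalently s = 0 or s = (b ± √(b²-24ac))/(4c)). Then Q := s(n⊗n - (1/3)Id) is a critical point of F, i.e. aQ - b(Q² - (1/3)|Q|² Id) + cQ|Q|² = 0. -/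
/-!
With `|n| = 1`, `P := n⊗n - (1/3)Id` satisfies `P² = (1/3)P + (2/9)Id`, hence `tr P² = 2/3`
and `P² - (1/3)|P|² Id = (1/3)P`. Every term of `∂F/∂Q` at `Q = sP` is then a multiple of `P`,
and the total coefficient is `a s - (b/3) s² + (2c/3) s³ = 0`.
-/

open Matrix

theorem uniaxial_mul_self {ι 𝕜 : Type*} [Fintype ι] [DecidableEq ι] [Field 𝕜]
    [CharZero 𝕜] {n : ι → 𝕜} (hn : n ⬝ᵥ n = 1) :
    (vecMulVec n n - (1 / 3 : 𝕜) • 1) * (vecMulVec n n - (1 / 3 : 𝕜) • 1) =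
      (1 / 3 : 𝕜) • (vecMulVec n n - (1 / 3 : 𝕜) • 1) + (2 / 9 : 𝕜) • 1 := by
  have hproj : vecMulVec n n * vecMulVec n n = vecMulVec n n := by
    rw [vecMulVec_mul_vecMulVec, hn, one_smul]
  simp only [sub_mul, mul_sub, Matrix.smul_mul, Matrix.mul_smul, hproj, mul_one, one_mul]
  module

theorem trace_uniaxial_mul_self {n : Fin 3 → ℝ} (hn : n ⬝ᵥ n = 1) :
    trace ((vecMulVec n n - (1 / 3 : ℝ) • 1) * (vecMulVec n n - (1 / 3 : ℝ) • 1)) =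
      2 / 3 := by
  rw [uniaxial_mul_self hn]
  simp [trace_vecMulVec, hn]
  norm_num

theorem gradF_smul (a b c s : ℝ) (P : Matrix (Fin 3) (Fin 3) ℝ) :
    gradF a b c (s • P) = (a * s + c * trace (P * P) * s ^ 3) • P
      - (b * s ^ 2) • (P * P - ((1 / 3 : ℝ) * trace (P * P)) • 1) := by
  simp only [gradF, smul_mul_smul, trace_smul, smul_eq_mul]
  module

theorem stmt8_general (a b c : ℝ)
    (n : Fin 3 → ℝ) (hn : n 0 ^ 2 + n 1 ^ 2 + n 2 ^ 2 = 1)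
    (s : ℝ) (hs : a * s - (b / 3) * s ^ 2 + (2 * c / 3) * s ^ 3 = 0)
    (Q : Matrix (Fin 3) (Fin 3) ℝ)
    (hQ : Q = s • (Matrix.of (fun i j => n i * n j)
      - (1 / 3 : ℝ) • (1 : Matrix (Fin 3) (Fin 3) ℝ))) :
    gradF a b c Q = 0 := by
  have hunit : n ⬝ᵥ n = 1 := by
    simp only [dotProduct, Fin.sum_univ_three]
    linear_combination hn
  have hQ' : Q = s • (vecMulVec n n - (1 / 3 : ℝ) • 1) := hQ
  rw [hQ', gradF_smul, trace_uniaxial_mul_self hunit, uniaxial_mul_self hunit]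
  calc _ = (a * s - (b / 3) * s ^ 2 + (2 * c / 3) * s ^ 3) •
        (vecMulVec n n - (1 / 3 : ℝ) • 1) := by module
    _ = 0 := by rw [hs, zero_smul]

theorem stmt8 (a b c : ℝ) (hc : 0 < c) (hdisc : 0 ≤ b ^ 2 - 24 * a * c)
    (n : Fin 3 → ℝ) (hn : n 0 ^ 2 + n 1 ^ 2 + n 2 ^ 2 = 1)
    (s : ℝ) (hs : a * s - (b / 3) * s ^ 2 + (2 * c / 3) * s ^ 3 = 0)
    (Q : Matrix (Fin 3) (Fin 3) ℝ)
    (hQ : Q = s • (Matrix.of (fun i j => n i * n j)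
      - (1 / 3 : ℝ) • (1 : Matrix (Fin 3) (Fin 3) ℝ))) :
    gradF a b c Q = 0 :=
  stmt8_general a b c n hn s hs Q hQ
end

section
/- The functions H₁(x,y,z) = (1-6y)/(6(1-6x)) and H₂(x,y,z) = (1+6x+6y-12z²)/(36(1-6x)²) are first integrals of the system x' = (2/3)(1-6x)z, y' = (2/3)(1-6y)z, z' = 2/3 + x + y - 4z², on the region x ≠ 1/6; i.e., along any solution (x(t),y(t),z(t)) with x(t) ≠ 1/6, the quantities H₁ and H₂ are constant in time. -/
/-!
Both first integrals are quotients `N / D` whose numerator and denominator have the same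
logarithmic derivative along the flow: `N' = -4z N`, `D' = -4z D` for `H₁` and
`N' = -8z N`, `D' = -8z D` for `H₂`. The quotient rule then gives `(N / D)' = 0`.
-/

variable {𝕜 : Type*}

theorem HasDerivAt.div_of_eq_mul [NontriviallyNormedField 𝕜] {f g : 𝕜 → 𝕜} {k t : 𝕜}
    (hf : HasDerivAt f (k * f t) t) (hg : HasDerivAt g (k * g t) t) (hg0 : g t ≠ 0) :
    HasDerivAt (fun s => f s / g s) 0 t :=
  (hf.div hg hg0).congr_deriv (by simp only [mul_comm, mul_left_comm, sub_self, zero_div])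

theorem div_eq_div_of_hasDerivAt_eq_mul [RCLike 𝕜] {f g k : 𝕜 → 𝕜}
    (hf : ∀ t, HasDerivAt f (k t * f t) t) (hg : ∀ t, HasDerivAt g (k t * g t) t)
    (hg0 : ∀ t, g t ≠ 0) (a b : 𝕜) : f a / g a = f b / g b :=
  have hq (t : 𝕜) := (hf t).div_of_eq_mul (hg t) (hg0 t)
  is_const_of_deriv_eq_zero (fun t => (hq t).differentiableAt) (fun t => (hq t).deriv) a b

theorem stmt12 (x y z : ℝ → ℝ)
    (hx : ∀ t, HasDerivAt x ((2 / 3) * (1 - 6 * x t) * z t) t)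
    (hy : ∀ t, HasDerivAt y ((2 / 3) * (1 - 6 * y t) * z t) t)
    (hz : ∀ t, HasDerivAt z (2 / 3 + x t + y t - 4 * (z t) ^ 2) t)
    (hne : ∀ t, x t ≠ 1 / 6) :
    (∀ t₁ t₂ : ℝ,
      (1 - 6 * y t₁) / (6 * (1 - 6 * x t₁)) = (1 - 6 * y t₂) / (6 * (1 - 6 * x t₂))) ∧
    (∀ t₁ t₂ : ℝ,
      (1 + 6 * x t₁ + 6 * y t₁ - 12 * (z t₁) ^ 2) / (36 * (1 - 6 * x t₁) ^ 2) =
      (1 + 6 * x t₂ + 6 * y t₂ - 12 * (z t₂) ^ 2) / (36 * (1 - 6 * x t₂) ^ 2)) := by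
  have hx6 (t : ℝ) : 1 - 6 * x t ≠ 0 := fun h => hne t (by linarith)
  have hu (t : ℝ) : HasDerivAt (fun s => 1 - 6 * x s) (-4 * z t * (1 - 6 * x t)) t :=
    ((hx t).const_mul 6).const_sub 1 |>.congr_deriv (by ring)
  have hv (t : ℝ) : HasDerivAt (fun s => 1 - 6 * y s) (-4 * z t * (1 - 6 * y t)) t :=
    ((hy t).const_mul 6).const_sub 1 |>.congr_deriv (by ring)
  constructor
  · refine div_eq_div_of_hasDerivAt_eq_mul hv (fun t => ?_) (fun t => ?_)
    · exact ((hu t).const_mul 6).congr_deriv (by ring)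
    · exact mul_ne_zero (by norm_num) (hx6 t)
  · refine div_eq_div_of_hasDerivAt_eq_mul (k := fun t => -8 * z t) (fun t => ?_) (fun t => ?_)
      (fun t => ?_)
    · exact ((((hx t).const_mul 6).const_add 1).add ((hy t).const_mul 6)).sub
        (((hz t).pow 2).const_mul 12) |>.congr_deriv (by ring)
    · exact (((hu t).pow 2).const_mul 36).congr_deriv (by ring)
    · exact mul_ne_zero (by norm_num) (pow_ne_zero 2 (hx6 t))
end
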